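/- arXiv:0912.0150 — 2 statements merged into one kernel-verified Lean document; each statement's English description precedes it below -/
import Mathlib

section
/- For every ε with 0 < ε ≤ 1, the function f_ε is differentiable at every point of ℝ and its derivative satisfies |f_ε'(s)| ≤ 1 + ε ≤ 2 for all s ∈ ℝ. -/
/-!
Inside `[-1, 1]` the function `s * |s| ^ ε` has derivative `(1 + ε) * |s| ^ ε`, also at `0`
because `ε > 0`; outside it `f` is affine with slope `1 + ε`. The two slopes agree at `±1`, so
the one-sided derivatives glue, and `f' s = (1 + ε) * min |s| 1 ^ ε ≤ 1 + ε`.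
-/

open Real Set Filter Topology

lemma hasDerivAt_mul_abs_rpow {ε : ℝ} (hε : 0 < ε) (s : ℝ) :
    HasDerivAt (fun x : ℝ => x * |x| ^ ε) ((1 + ε) * |s| ^ ε) s := by
  rcases eq_or_ne s 0 with rfl | hs
  · rw [abs_zero, zero_rpow hε.ne', mul_zero, hasDerivAt_iff_tendsto_slope_zero]
    have hcont : Tendsto (fun t : ℝ => |t| ^ ε) (𝓝[≠] 0) (𝓝 0) := by
      have := (continuous_abs.rpow_const fun _ => Or.inr hε.le).continuousAt (x := (0 : ℝ))
      simpa [zero_rpow hε.ne'] using this.tendsto.mono_left nhdsWithin_le_nhds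
    refine hcont.congr' ?_
    filter_upwards [self_mem_nhdsWithin] with t ht
    simp [inv_mul_cancel_left₀ (show t ≠ 0 from ht)]
  · have hs' : |s| ≠ 0 := abs_ne_zero.mpr hs
    refine ((hasDerivAt_id' s).mul ((hasDerivAt_abs hs).rpow_const (Or.inl hs'))).congr_deriv ?_
    rw [rpow_sub_one hs']
    field_simp
    rw [self_mul_sign]
    ring

lemma hasDerivAt_of_nhdsLE_of_nhdsGE {F : Type*} [NormedAddCommGroup F] [NormedSpace ℝ F]
    {f g h : ℝ → F} {a : ℝ} {d : F}
    (hg : HasDerivAt g d a) (hh : HasDerivAt h d a)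
    (hfg : f =ᶠ[𝓝[≤] a] g) (hfh : f =ᶠ[𝓝[≥] a] h) : HasDerivAt f d a := by
  have := (hg.hasDerivWithinAt.congr_of_eventuallyEq hfg (hfg.eq_of_nhdsWithin self_mem_Iic)).union
    (hh.hasDerivWithinAt.congr_of_eventuallyEq hfh (hfh.eq_of_nhdsWithin self_mem_Ici))
  rwa [Iic_union_Ici, hasDerivWithinAt_univ] at this

section

variable {ε : ℝ} {f : ℝ → ℝ}

lemma eq_affine_of_one_le
    (hf₂ : ∀ s : ℝ, 1 ≤ |s| → f s = (1 + ε) * s - ε * Real.sign s)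
    {x : ℝ} (hx : 1 ≤ x) : f x = (1 + ε) * x - ε := by
  have hx0 : 0 < x := by linarith
  rw [hf₂ x (by rwa [abs_of_pos hx0]), Real.sign_of_pos hx0, mul_one]

lemma eq_affine_of_le_neg_one
    (hf₂ : ∀ s : ℝ, 1 ≤ |s| → f s = (1 + ε) * s - ε * Real.sign s)
    {x : ℝ} (hx : x ≤ -1) : f x = (1 + ε) * x + ε := by
  have hx0 : x < 0 := by linarith
  rw [hf₂ x (by rw [abs_of_neg hx0]; linarith), Real.sign_of_neg hx0, mul_neg_one, sub_neg_eq_add]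

lemma hasDerivAt_of_piecewise_mul_abs_rpow (hε : 0 < ε)
    (hf₁ : ∀ s : ℝ, |s| ≤ 1 → f s = s * |s| ^ ε)
    (hf₂ : ∀ s : ℝ, 1 ≤ |s| → f s = (1 + ε) * s - ε * Real.sign s) (s : ℝ) :
    HasDerivAt f ((1 + ε) * min |s| 1 ^ ε) s := by
  have hg := hasDerivAt_mul_abs_rpow hε
  have hR (t : ℝ) : HasDerivAt (fun x => (1 + ε) * x - ε) (1 + ε) t := by
    simpa using ((hasDerivAt_id' t).const_mul (1 + ε)).sub_const ε
  have hL (t : ℝ) : HasDerivAt (fun x => (1 + ε) * x + ε) (1 + ε) t := by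
    simpa using ((hasDerivAt_id' t).const_mul (1 + ε)).add_const ε
  rcases lt_trichotomy |s| 1 with h | h | h
  · rw [min_eq_left h.le]
    refine (hg s).congr_of_eventuallyEq ?_
    filter_upwards [continuous_abs.continuousAt.eventually_lt_const h] with x hx
      using hf₁ x hx.le
  · rw [h, min_self, one_rpow, mul_one]
    rcases (abs_eq zero_le_one).mp h with rfl | rfl
    · refine hasDerivAt_of_nhdsLE_of_nhdsGE (by simpa using hg 1) (hR 1) ?_ ?_
      · filter_upwards [Ioc_mem_nhdsLE (show (-1 : ℝ) < 1 by norm_num)] with x hx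
          using hf₁ x (abs_le.mpr ⟨hx.1.le, hx.2⟩)
      · filter_upwards [self_mem_nhdsWithin] with x hx using eq_affine_of_one_le hf₂ hx
    · refine hasDerivAt_of_nhdsLE_of_nhdsGE (hL (-1)) (by simpa using hg (-1)) ?_ ?_
      · filter_upwards [self_mem_nhdsWithin] with x hx using eq_affine_of_le_neg_one hf₂ hx
      · filter_upwards [Ico_mem_nhdsGE (show (-1 : ℝ) < 1 by norm_num)] with x hx
          using hf₁ x (abs_le.mpr ⟨hx.1, hx.2.le⟩)
  · rw [min_eq_right h.le, one_rpow, mul_one]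
    rcases lt_abs.mp h with h | h
    · refine (hR s).congr_of_eventuallyEq ?_
      filter_upwards [eventually_gt_nhds h] with x hx using eq_affine_of_one_le hf₂ hx.le
    · refine (hL s).congr_of_eventuallyEq ?_
      filter_upwards [eventually_lt_nhds (show s < -1 by linarith)] with x hx
        using eq_affine_of_le_neg_one hf₂ hx.le

end

theorem stmt_3 (ε : ℝ) (hε : 0 < ε) (hε1 : ε ≤ 1) (f : ℝ → ℝ)
    (hf₁ : ∀ s : ℝ, |s| ≤ 1 → f s = s * |s| ^ ε)
    (hf₂ : ∀ s : ℝ, 1 ≤ |s| → f s = (1 + ε) * s - ε * Real.sign s) :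
    ∀ s : ℝ, DifferentiableAt ℝ f s ∧ |deriv f s| ≤ 1 + ε ∧ (1 + ε : ℝ) ≤ 2 := by
  intro s
  have hd := hasDerivAt_of_piecewise_mul_abs_rpow hε hf₁ hf₂ s
  refine ⟨hd.differentiableAt, ?_, by linarith⟩
  rw [hd.deriv, abs_of_nonneg (by positivity)]
  exact mul_le_of_le_one_right (by linarith) (rpow_le_one (by positivity) (min_le_right _ _) hε.le)
end

section
/- Let Ω ⊆ ℝ³ be open, λ, μ, β ∈ ℝ, let u, v : Ω → ℝ be C² functions satisfying −Δu + λu = u³ − βuv² and −Δv + μv = v³ − βvu² pointwise on Ω, and let V : Ω → ℝ³ be of class C¹. Set Q(u,v) := u⁴ + v⁴ − 2βu²v² − 2λu² − 2μv² and W := ⟨∇u, V⟩∇u − (1/2)|∇u|²V + ⟨∇v, V⟩∇v − (1/2)|∇v|²V + (1/4)Q(u,v)V. Then at every x ∈ Ω, div W = Σ_{i,k=1}^{3} ∂u/∂xᵢ · ∂u/∂xₖ · ∂Vᵢ/∂xₖ + Σ_{i,k=1}^{3} ∂v/∂xᵢ · ∂v/∂xₖ · ∂Vᵢ/∂xₖ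 − (1/2)(|∇u|² + |∇v|²) div V + (1/4)Q(u,v) div V. -/
/-- Partial derivative of `f` in the `i`-th coordinate direction. -/
noncomputable def pd (f : (Fin 3 → ℝ) → ℝ) (i : Fin 3) (x : Fin 3 → ℝ) : ℝ :=
  fderiv ℝ f x (Pi.single i 1)

/-- The Laplacian: sum of the second partial derivatives along the coordinate directions. -/
noncomputable def lap (f : (Fin 3 → ℝ) → ℝ) (x : Fin 3 → ℝ) : ℝ :=
  ∑ i : Fin 3, pd (pd f i) i x

/-!
`W` is the sum of the stress fluxes `⟨∇u, V⟩∇u − ½|∇u|²V` and `⟨∇v, V⟩∇v − ½|∇v|²V` and of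
`¼ Q V`. By the product rule and the symmetry of the Hessian, the divergence of the stress flux of
`u` is `Σ ∂ᵢu ∂ₖu ∂ₖVᵢ + ⟨∇u, V⟩ Δu − ½|∇u|² div V`, and `div (Q V) = ⟨∇Q, V⟩ + Q div V`.
The equations give `∇Q = −4 (Δu ∇u + Δv ∇v)`, so the terms `⟨∇u, V⟩ Δu` and `⟨∇v, V⟩ Δv`
cancel against `¼ ⟨∇Q, V⟩`.
-/

open Finset

noncomputable def divergence (V : (Fin 3 → ℝ) → Fin 3 → ℝ) (x : Fin 3 → ℝ) : ℝ :=
  ∑ k, pd (fun y => V y k) k x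

noncomputable def stressFlux (u : (Fin 3 → ℝ) → ℝ) (V : (Fin 3 → ℝ) → Fin 3 → ℝ) (k : Fin 3)
    (y : Fin 3 → ℝ) : ℝ :=
  (∑ i, pd u i y * V y i) * pd u k y - (1 / 2) * (∑ i, pd u i y ^ 2) * V y k

section PartialDerivative

variable {f g u v : (Fin 3 → ℝ) → ℝ} {x : Fin 3 → ℝ} {k : Fin 3}

theorem HasFDerivAt.pd_eq {D : (Fin 3 → ℝ) →L[ℝ] ℝ} (h : HasFDerivAt f D x) :
    pd f k x = D (Pi.single k 1) := by
  rw [pd, h.fderiv]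

theorem pd_const (c : ℝ) : pd (fun _ => c) k x = 0 := by
  simp [pd]

theorem pd_add (hf : DifferentiableAt ℝ f x) (hg : DifferentiableAt ℝ g x) :
    pd (fun y => f y + g y) k x = pd f k x + pd g k x :=
  (hf.hasFDerivAt.fun_add hg.hasFDerivAt).pd_eq

theorem pd_sub (hf : DifferentiableAt ℝ f x) (hg : DifferentiableAt ℝ g x) :
    pd (fun y => f y - g y) k x = pd f k x - pd g k x :=
  (hf.hasFDerivAt.fun_sub hg.hasFDerivAt).pd_eq

theorem pd_mul (hf : DifferentiableAt ℝ f x) (hg : DifferentiableAt ℝ g x) :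
    pd (fun y => f y * g y) k x = pd f k x * g x + f x * pd g k x := by
  rw [(hf.hasFDerivAt.fun_mul hg.hasFDerivAt).pd_eq]
  simp only [add_apply, smul_apply, smul_eq_mul, pd]
  ring

theorem pd_pow (hf : DifferentiableAt ℝ f x) (n : ℕ) :
    pd (fun y => f y ^ n) k x = n * f x ^ (n - 1) * pd f k x := by
  rw [(hf.hasFDerivAt.pow n).pd_eq]
  simp [pd]

theorem pd_sum {F : Fin 3 → (Fin 3 → ℝ) → ℝ} (hF : ∀ i, DifferentiableAt ℝ (F i) x) :
    pd (fun y => ∑ i, F i y) k x = ∑ i, pd (F i) k x := by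
  rw [(HasFDerivAt.fun_sum fun i _ => (hF i).hasFDerivAt).pd_eq]
  simp [pd]

theorem ContDiffAt.differentiableAt_pd (hu : ContDiffAt ℝ 2 u x) (i : Fin 3) :
    DifferentiableAt ℝ (pd u i) x :=
  ((hu.fderiv_right le_rfl).differentiableAt one_ne_zero).clm_apply (differentiableAt_const _)

theorem ContDiffAt.pd_pd_comm (hu : ContDiffAt ℝ 2 u x) (i k : Fin 3) :
    pd (pd u i) k x = pd (pd u k) i x := by
  have hd := (hu.fderiv_right le_rfl).differentiableAt one_ne_zero
  have hsecond : ∀ j l : Fin 3,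
      pd (pd u j) l x = fderiv ℝ (fderiv ℝ u) x (Pi.single l 1) (Pi.single j 1) := fun j l => by
    rw [pd, show pd u j = fun y => fderiv ℝ u y (Pi.single j 1) from rfl,
      fderiv_clm_apply hd (differentiableAt_const _)]
    simp
  rw [hsecond, hsecond, hu.isSymmSndFDerivAt (by simp)]

theorem pd_couplingPotential (lam mu β : ℝ) (hu : DifferentiableAt ℝ u x)
    (hv : DifferentiableAt ℝ v x) (k : Fin 3) :
    pd (fun y => u y ^ 4 + v y ^ 4 - 2 * β * u y ^ 2 * v y ^ 2 - 2 * lam * u y ^ 2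
      - 2 * mu * v y ^ 2) k x
      = 4 * (u x ^ 3 - β * u x * v x ^ 2 - lam * u x) * pd u k x
        + 4 * (v x ^ 3 - β * v x * u x ^ 2 - mu * v x) * pd v k x := by
  simp (disch := fun_prop) only [pd_add, pd_sub, pd_mul, pd_pow, pd_const]
  push_cast
  ring

theorem ContDiffAt.differentiableAt_stressFlux {V : (Fin 3 → ℝ) → Fin 3 → ℝ}
    (hu : ContDiffAt ℝ 2 u x) (hV : DifferentiableAt ℝ V x) (k : Fin 3) :
    DifferentiableAt ℝ (stressFlux u V k) x := by
  have hpd := hu.differentiableAt_pd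
  have hVi : ∀ i, DifferentiableAt ℝ (fun y => V y i) x := differentiableAt_pi.mp hV
  unfold stressFlux
  fun_prop

theorem sum_pd_stressFlux {V : (Fin 3 → ℝ) → Fin 3 → ℝ} (hu : ContDiffAt ℝ 2 u x)
    (hV : DifferentiableAt ℝ V x) :
    ∑ k, pd (stressFlux u V k) k x
      = ∑ i, ∑ k, pd u i x * pd u k x * pd (fun y => V y i) k x
        + (∑ i, pd u i x * V x i) * lap u x
        - 1 / 2 * (∑ i, pd u i x ^ 2) * divergence V x := by
  have hpd := hu.differentiableAt_pd
  have hVi : ∀ i, DifferentiableAt ℝ (fun y => V y i) x := differentiableAt_pi.mp hV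
  have hu1 : DifferentiableAt ℝ u x := hu.differentiableAt two_ne_zero
  have hcomp : ∀ k, pd (stressFlux u V k) k x
      = (∑ i, (pd (pd u i) k x * V x i + pd u i x * pd (fun y => V y i) k x)) * pd u k x
        + (∑ i, pd u i x * V x i) * pd (pd u k) k x
        - 1 / 2 * ((∑ i, 2 * pd u i x * pd (pd u i) k x) * V x k
          + (∑ i, pd u i x ^ 2) * pd (fun y => V y k) k x) := by
    intro k
    unfold stressFlux
    simp (disch := first | fun_prop | intro; fun_prop) only
      [pd_sub, pd_mul, pd_sum, pd_const, pd_pow]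
    norm_num
    ring
  have hhessian : ∑ k, ∑ i, pd (pd u i) k x * V x i * pd u k x
      = ∑ k, ∑ i, pd u i x * pd (pd u i) k x * V x k := by
    rw [sum_comm]
    refine sum_congr rfl fun k _ => sum_congr rfl fun i _ => ?_
    rw [hu.pd_pd_comm]
    ring
  simp only [hcomp, lap, divergence, Fin.sum_univ_three] at hhessian ⊢
  linear_combination hhessian

theorem sum_pd_mul_apply {V : (Fin 3 → ℝ) → Fin 3 → ℝ} (hf : DifferentiableAt ℝ f x)
    (hV : DifferentiableAt ℝ V x) :
    ∑ k, pd (fun y => f y * V y k) k x = ∑ k, pd f k x * V x k + f x * divergence V x := by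
  simp only [pd_mul hf (differentiableAt_pi.mp hV _), sum_add_distrib, divergence, mul_sum]

end PartialDerivative

theorem stmt_9 (Ω : Set (Fin 3 → ℝ)) (hΩ : IsOpen Ω) (lam mu β : ℝ)
    (u v : (Fin 3 → ℝ) → ℝ) (hu : ContDiffOn ℝ 2 u Ω) (hv : ContDiffOn ℝ 2 v Ω)
    (hequ : ∀ x ∈ Ω, -lap u x + lam * u x = (u x) ^ 3 - β * u x * (v x) ^ 2)
    (heqv : ∀ x ∈ Ω, -lap v x + mu * v x = (v x) ^ 3 - β * v x * (u x) ^ 2)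
    (V : (Fin 3 → ℝ) → (Fin 3 → ℝ)) (hV : ContDiffOn ℝ 1 V Ω)
    (Q : (Fin 3 → ℝ) → ℝ)
    (hQ : Q = fun y => (u y) ^ 4 + (v y) ^ 4 - 2 * β * (u y) ^ 2 * (v y) ^ 2
      - 2 * lam * (u y) ^ 2 - 2 * mu * (v y) ^ 2)
    -- components of W = ⟨∇u,V⟩∇u − (1/2)|∇u|²V + ⟨∇v,V⟩∇v − (1/2)|∇v|²V + (1/4)Q(u,v)V
    (W : Fin 3 → (Fin 3 → ℝ) → ℝ)
    (hW : ∀ k, W k = fun y =>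
      (∑ i : Fin 3, pd u i y * V y i) * pd u k y
        - (1 / 2) * (∑ i : Fin 3, (pd u i y) ^ 2) * V y k
        + (∑ i : Fin 3, pd v i y * V y i) * pd v k y
        - (1 / 2) * (∑ i : Fin 3, (pd v i y) ^ 2) * V y k
        + (1 / 4) * Q y * V y k) :
    ∀ x ∈ Ω,
      (∑ k : Fin 3, pd (W k) k x)
        = (∑ i : Fin 3, ∑ k : Fin 3, pd u i x * pd u k x * pd (fun y => V y i) k x)
          + (∑ i : Fin 3, ∑ k : Fin 3, pd v i x * pd v k x * pd (fun y => V y i) k x)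
          - (1 / 2) * ((∑ i : Fin 3, (pd u i x) ^ 2) + (∑ i : Fin 3, (pd v i x) ^ 2))
              * (∑ k : Fin 3, pd (fun y => V y k) k x)
          + (1 / 4) * Q x * (∑ k : Fin 3, pd (fun y => V y k) k x) := by
  intro x hx
  have hux : ContDiffAt ℝ 2 u x := hu.contDiffAt (hΩ.mem_nhds hx)
  have hvx : ContDiffAt ℝ 2 v x := hv.contDiffAt (hΩ.mem_nhds hx)
  have hVx : DifferentiableAt ℝ V x :=
    (hV.contDiffAt (hΩ.mem_nhds hx)).differentiableAt one_ne_zero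
  have hu1 : DifferentiableAt ℝ u x := hux.differentiableAt two_ne_zero
  have hv1 : DifferentiableAt ℝ v x := hvx.differentiableAt two_ne_zero
  have hQx : DifferentiableAt ℝ Q x := by rw [hQ]; fun_prop
  have hWsplit : ∀ k, W k = fun y =>
      stressFlux u V k y + stressFlux v V k y + 1 / 4 * (Q y * V y k) := by
    intro k; funext y; rw [hW]; simp only [stressFlux]; ring
  have hgradQ : ∀ k, pd Q k x = -4 * (lap u x * pd u k x + lap v x * pd v k x) := by
    intro k
    rw [hQ, pd_couplingPotential lam mu β hu1 hv1]
    linear_combination (-4 * pd u k x) * hequ x hx + (-4 * pd v k x) * heqv x hx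
  calc ∑ k, pd (W k) k x
      = ∑ k, pd (stressFlux u V k) k x + ∑ k, pd (stressFlux v V k) k x
        + 1 / 4 * ∑ k, pd (fun y => Q y * V y k) k x := by
        rw [← sum_add_distrib, mul_sum, ← sum_add_distrib]
        refine sum_congr rfl fun k _ => ?_
        have hQV : DifferentiableAt ℝ (fun y => Q y * V y k) x :=
          hQx.mul (differentiableAt_pi.mp hVx k)
        rw [hWsplit, pd_add ((hux.differentiableAt_stressFlux hVx k).fun_add
            (hvx.differentiableAt_stressFlux hVx k)) (hQV.const_mul _),
          pd_add (hux.differentiableAt_stressFlux hVx k) (hvx.differentiableAt_stressFlux hVx k),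
          pd_mul (differentiableAt_const _) hQV, pd_const]
        ring
    _ = _ := by
        rw [sum_pd_stressFlux hux hVx, sum_pd_stressFlux hvx hVx, sum_pd_mul_apply hQx hVx]
        simp only [hgradQ, divergence, Fin.sum_univ_three]
        ring
end
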